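/- For all natural numbers k ≥ 1 and q ≥ 1 with n = k + q, the subspaces H^{⊙[k+1],∧[q−1]} and H^{⊙[k−1],∧[q+1]} of H^{⊗n} have trivial intersection: H^{⊙[k+1],∧[q−1]} ∩ H^{⊙[k−1],∧[q+1]} = {0}. -/

import Mathlib

open scoped BigOperators

noncomputable section

variable (F : Type*) [Field F] [CharZero F] (H : Type*) [AddCommGroup H] [Module F H]

/-- The `n`-th tensor power of `H` over `F`. -/
abbrev TP (n : ℕ) : Type _ := PiTensorProduct F (fun _ : Fin n => H)

/-- The action of a permutation `σ ∈ S_n` on the `n`-th tensor power,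
permuting the tensor factors. -/
def permMap (n : ℕ) (σ : Equiv.Perm (Fin n)) : TP F H n →ₗ[F] TP F H n :=
  (PiTensorProduct.reindex F (fun _ : Fin n => H) σ).toLinearMap

/-- Identification of tensor powers of equal degrees. -/
def tpCast {m m' : ℕ} (hm : m = m') : TP F H m →ₗ[F] TP F H m' :=
  (PiTensorProduct.reindex F (fun _ : Fin m => H) (finCongr hm)).toLinearMap

/-- The permutations of `{1, …, n}` moving only positions in `a`. -/
def permsOn (n : ℕ) (a : Finset (Fin n)) : Finset (Equiv.Perm (Fin n)) :=
  Finset.univ.filter fun σ => ∀ i, i ∉ a → σ i = i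

/-- `S_a`: symmetrisation over the positions in `a` (the average over all
permutations of the positions in `a`, fixing the other positions). -/
def symOn (n : ℕ) (a : Finset (Fin n)) : TP F H n →ₗ[F] TP F H n :=
  (a.card.factorial : F)⁻¹ • ∑ σ ∈ permsOn n a, permMap F H n σ

/-- `A_a`: skew-symmetrisation over the positions in `a` (the signed average over
all permutations of the positions in `a`, fixing the other positions). -/
def altOn (n : ℕ) (a : Finset (Fin n)) : TP F H n →ₗ[F] TP F H n :=
  (a.card.factorial : F)⁻¹ • ∑ σ ∈ permsOn n a, (Equiv.Perm.sign σ : ℤ) • permMap F H n σ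

/-- The first `k` positions of `{1, …, n}`. -/
def firstSet (n k : ℕ) : Finset (Fin n) := Finset.univ.filter fun i => (i : ℕ) < k

/-- The last `m` positions of `{1, …, n}`. -/
def lastSet (n m : ℕ) : Finset (Fin n) := Finset.univ.filter fun i => n - m ≤ (i : ℕ)

/-- `H^{⊙a,∧aᶜ}`: the image of `S_a ∘ A_{aᶜ}`, the subspace of `n`-tensors symmetric in
the positions of `a` and skew-symmetric in the positions of `aᶜ`. -/
def Hgen (n : ℕ) (a : Finset (Fin n)) : Submodule F (TP F H n) :=
  LinearMap.range (symOn F H n a ∘ₗ altOn F H n aᶜ)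

/-- `H_{k,n-k} = H^{⊙k} ⊗ H^{∧(n-k)}`: the subspace of `n`-tensors symmetric in the
first `k` positions and skew-symmetric in the remaining positions. -/
def Hmix (n k : ℕ) : Submodule F (TP F H n) := Hgen F H n (firstSet n k)

/-- `H^{⊙[k],∧[n-k]}`: the span of the subspaces `H^{⊙a,∧aᶜ}` over all `k`-element
subsets `a ⊆ {1, …, n}`. -/
def HmixSpan (n k : ℕ) : Submodule F (TP F H n) :=
  ⨆ a ∈ {a : Finset (Fin n) | a.card = k}, Hgen F H n a

/-- The global operator whose restriction to `H_{k,q}` (with `m = q + 1`, `n = k + q`)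
is `d̆_q`: skew-symmetrisation of the last `m` positions, scaled by `m`. -/
def dOp (n m : ℕ) : TP F H n →ₗ[F] TP F H n := (m : F) • altOn F H n (lastSet n m)

/-- The global operator whose restriction to `H_{k-1,q+1}` (with `m = k`, `n = k + q`)
is `d̆*_q`: symmetrisation of the first `m` positions, scaled by `m`. -/
def dStarOp (n m : ℕ) : TP F H n →ₗ[F] TP F H n := (m : F) • symOn F H n (firstSet n m)

/-- The elementary element `h₁⊙…⊙h_k ⊗ x₁∧…∧x_q` of `H_{k,q} ⊆ H^{⊗(k+q)}`. -/
def elem (k q : ℕ) (h : Fin k → H) (x : Fin q → H) : TP F H (k + q) :=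
  ∑ ρ : Equiv.Perm (Fin k), ∑ τ : Equiv.Perm (Fin q),
    (Equiv.Perm.sign τ : ℤ) •
      (PiTensorProduct.tprod F (Fin.append (h ∘ ρ) (x ∘ τ)) : TP F H (k + q))

/-!
Let `T = ∑_{i,j} (i j)` be the sum of all transpositions; it commutes with every permutation.
On the image of `e_a = S_a A_{aᶜ}`, with `m = |a|` and `r = n - m`, split `T` into the
transpositions inside `a` (acting by `1`), inside `aᶜ` (acting by `-1`, or `1` on the
diagonal) and the cross term `Y = ∑_{i ∈ a, j ∉ a} (i j)`: this gives
`T e_a = (m² + r (2 - r)) e_a + 2 Y e_a`. Counting the products `e_a (i j) (i' j') e_a`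
gives `Y² e_a = m r e_a + (m - r) Y e_a`, so `T` satisfies on `H^{⊙[m],∧[n-m]}` the quadratic
equation with roots `n (2m - n + 2)` and `n (2m - n)`. For `m = k + 1` and `m = k - 1` the two
root pairs are disjoint as soon as `n ≠ 0`, so the two polynomials are coprime and their kernels
meet trivially.
-/

open Equiv

lemma Finset.sum_eq_add_card_sub_one_smul {R ι M : Type*} [Ring R] [DecidableEq ι]
    [AddCommGroup M] [Module R M] {s : Finset ι} {i : ι} (hi : i ∈ s) {f : ι → M} {c : M}
    (hf : ∀ j ∈ s, j ≠ i → f j = c) :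
    ∑ j ∈ s, f j = f i + ((s.card : R) - 1) • c := by
  rw [← Finset.add_sum_erase s f hi,
    Finset.sum_congr rfl fun j hj => hf j (Finset.mem_of_mem_erase hj) (Finset.ne_of_mem_erase hj),
    Finset.sum_const, Finset.card_erase_of_mem hi, ← Nat.cast_smul_eq_nsmul R,
    Nat.cast_sub (Finset.card_pos.2 ⟨i, hi⟩), Nat.cast_one]

section PermsOn

variable {n : ℕ} {a : Finset (Fin n)} {σ τ : Perm (Fin n)}

lemma mem_permsOn : σ ∈ permsOn n a ↔ ∀ i, i ∉ a → σ i = i := by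
  simp [permsOn]

lemma mul_mem_permsOn (hσ : σ ∈ permsOn n a) (hτ : τ ∈ permsOn n a) :
    σ * τ ∈ permsOn n a :=
  mem_permsOn.2 fun i hi => by
    rw [Perm.mul_apply, mem_permsOn.1 hτ i hi, mem_permsOn.1 hσ i hi]

lemma inv_mem_permsOn (hσ : σ ∈ permsOn n a) : σ⁻¹ ∈ permsOn n a :=
  mem_permsOn.2 fun i hi => by
    rw [Perm.inv_eq_iff_eq, mem_permsOn.1 hσ i hi]

lemma swap_mem_permsOn {i j : Fin n} (hi : i ∈ a) (hj : j ∈ a) :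
    swap i j ∈ permsOn n a :=
  mem_permsOn.2 fun _ hx =>
    swap_apply_of_ne_of_ne (by rintro rfl; exact hx hi) (by rintro rfl; exact hx hj)

lemma apply_mem_iff_of_mem_permsOn (hσ : σ ∈ permsOn n a) (i : Fin n) :
    σ i ∈ a ↔ i ∈ a := by
  refine ⟨fun h => ?_, fun h => ?_⟩
  · by_contra hi
    rw [mem_permsOn.1 hσ i hi] at h
    exact hi h
  · by_contra hσi
    have h' : i = σ i := by simpa using mem_permsOn.1 (inv_mem_permsOn hσ) _ hσi
    exact hσi (h' ▸ h)

lemma apply_mem_iff_of_mem_permsOn_compl (hσ : σ ∈ permsOn n aᶜ) (i : Fin n) :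
    σ i ∈ a ↔ i ∈ a := by
  simpa using (apply_mem_iff_of_mem_permsOn hσ i).not

lemma commute_of_mem_permsOn_compl (hσ : σ ∈ permsOn n a) (hτ : τ ∈ permsOn n aᶜ) :
    Commute σ τ := by
  ext x
  by_cases hx : x ∈ a
  · have hτx : τ x = x := mem_permsOn.1 hτ x (by simpa using hx)
    have hτσx : τ (σ x) = σ x :=
      mem_permsOn.1 hτ _ (by simpa using (apply_mem_iff_of_mem_permsOn hσ x).2 hx)
    simp [Perm.mul_apply, hτx, hτσx]
  · have hσx : σ x = x := mem_permsOn.1 hσ x hx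
    have hστx : σ (τ x) = τ x :=
      mem_permsOn.1 hσ _ (by simpa using (apply_mem_iff_of_mem_permsOn_compl hτ x).not.2 hx)
    simp [Perm.mul_apply, hσx, hστx]

lemma card_permsOn : (permsOn n a).card = a.card.factorial := by
  have h : (permsOn n a).card
      = Fintype.card {σ : Perm (Fin n) // ∀ i, i ∉ a → σ i = i} := by
    rw [Fintype.card_subtype]
    rfl
  rw [h, ← Fintype.card_congr (Perm.subtypeEquivSubtypePerm (· ∈ a)),
    Fintype.card_perm, Fintype.card_coe]

lemma sum_permsOn_mul_left {M : Type*} [AddCommMonoid M] (hσ : σ ∈ permsOn n a)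
    (f : Perm (Fin n) → M) :
    ∑ τ ∈ permsOn n a, f (σ * τ) = ∑ τ ∈ permsOn n a, f τ :=
  Finset.sum_equiv (Equiv.mulLeft σ)
    (fun τ => ⟨fun h => mul_mem_permsOn hσ h,
      fun h => by simpa using mul_mem_permsOn (inv_mem_permsOn hσ) h⟩)
    fun _ _ => rfl

lemma sum_permsOn_mul_right {M : Type*} [AddCommMonoid M] (hσ : σ ∈ permsOn n a)
    (f : Perm (Fin n) → M) :
    ∑ τ ∈ permsOn n a, f (τ * σ) = ∑ τ ∈ permsOn n a, f τ :=
  Finset.sum_equiv (Equiv.mulRight σ)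
    (fun τ => ⟨fun h => mul_mem_permsOn h hσ,
      fun h => by simpa using mul_mem_permsOn h (inv_mem_permsOn hσ)⟩)
    fun _ _ => rfl

end PermsOn

section Symmetrizer

variable (K : Type*) [Field K] {A : Type*} [Ring A] [Algebra K A] {n : ℕ}
  (ρ : Perm (Fin n) →* A) (a : Finset (Fin n))

def symmetrizer : A :=
  (a.card.factorial : K)⁻¹ • ∑ σ ∈ permsOn n a, ρ σ

def alternator : A :=
  (a.card.factorial : K)⁻¹ • ∑ σ ∈ permsOn n a, (Perm.sign σ : ℤ) • ρ σ

variable {K ρ a} {σ : Perm (Fin n)}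

lemma mul_symmetrizer (hσ : σ ∈ permsOn n a) :
    ρ σ * symmetrizer K ρ a = symmetrizer K ρ a := by
  rw [symmetrizer, mul_smul_comm, Finset.mul_sum]
  simp_rw [← map_mul]
  rw [sum_permsOn_mul_left hσ ρ]

lemma symmetrizer_mul (hσ : σ ∈ permsOn n a) :
    symmetrizer K ρ a * ρ σ = symmetrizer K ρ a := by
  rw [symmetrizer, smul_mul_assoc, Finset.sum_mul]
  simp_rw [← map_mul]
  rw [sum_permsOn_mul_right hσ ρ]

lemma mul_alternator (hσ : σ ∈ permsOn n a) :
    ρ σ * alternator K ρ a = (Perm.sign σ : ℤ) • alternator K ρ a := by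
  have key : ∑ τ ∈ permsOn n a, ρ σ * ((Perm.sign τ : ℤ) • ρ τ)
      = ∑ τ ∈ permsOn n a,
          (Perm.sign σ : ℤ) • (Perm.sign (σ * τ) : ℤ) • ρ (σ * τ) := by
    refine Finset.sum_congr rfl fun τ _ => ?_
    rw [mul_smul_comm, ← map_mul, smul_smul, ← Units.val_mul, Perm.sign_mul, ← mul_assoc,
      Int.units_mul_self, one_mul]
  rw [alternator, mul_smul_comm, Finset.mul_sum, key,
    sum_permsOn_mul_left hσ fun τ => (Perm.sign σ : ℤ) • (Perm.sign τ : ℤ) • ρ τ,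
    ← Finset.smul_sum, smul_comm]

lemma alternator_mul (hσ : σ ∈ permsOn n a) :
    alternator K ρ a * ρ σ = (Perm.sign σ : ℤ) • alternator K ρ a := by
  have key : ∑ τ ∈ permsOn n a, ((Perm.sign τ : ℤ) • ρ τ) * ρ σ
      = ∑ τ ∈ permsOn n a,
          (Perm.sign σ : ℤ) • (Perm.sign (τ * σ) : ℤ) • ρ (τ * σ) := by
    refine Finset.sum_congr rfl fun τ _ => ?_
    rw [smul_mul_assoc, ← map_mul, smul_smul, ← Units.val_mul, Perm.sign_mul, mul_comm,
      mul_assoc, Int.units_mul_self, mul_one]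
  rw [alternator, smul_mul_assoc, Finset.sum_mul, key,
    sum_permsOn_mul_right hσ fun τ => (Perm.sign σ : ℤ) • (Perm.sign τ : ℤ) • ρ τ,
    ← Finset.smul_sum, smul_comm]

lemma symmetrizer_mul_self [CharZero K] :
    symmetrizer K ρ a * symmetrizer K ρ a = symmetrizer K ρ a := by
  nth_rewrite 1 [symmetrizer]
  rw [smul_mul_assoc, Finset.sum_mul, Finset.sum_congr rfl fun σ hσ => mul_symmetrizer hσ, Finset.sum_const, card_permsOn,
    ← Nat.cast_smul_eq_nsmul K, smul_smul,
    inv_mul_cancel₀ (Nat.cast_ne_zero.2 a.card.factorial_ne_zero), one_smul]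

lemma alternator_mul_self [CharZero K] :
    alternator K ρ a * alternator K ρ a = alternator K ρ a := by
  nth_rewrite 1 [alternator]
  rw [smul_mul_assoc, Finset.sum_mul, Finset.sum_congr rfl fun σ hσ => by
      rw [smul_mul_assoc, mul_alternator hσ, smul_smul, ← Units.val_mul, Int.units_mul_self,
        Units.val_one, one_smul],
    Finset.sum_const, card_permsOn, ← Nat.cast_smul_eq_nsmul K, smul_smul,
    inv_mul_cancel₀ (Nat.cast_ne_zero.2 a.card.factorial_ne_zero), one_smul]

lemma commute_symmetrizer {x : A} (hx : ∀ σ ∈ permsOn n a, Commute x (ρ σ)) :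
    Commute x (symmetrizer K ρ a) :=
  (Commute.sum_right _ _ _ hx).smul_right _

lemma commute_alternator {x : A} (hx : ∀ σ ∈ permsOn n a, Commute x (ρ σ)) :
    Commute x (alternator K ρ a) :=
  (Commute.sum_right _ _ _ fun σ hσ => (hx σ hσ).smul_right _).smul_right _

end Symmetrizer

section SymAlt

variable (K : Type*) [Field K] {A : Type*} [Ring A] [Algebra K A] {n : ℕ}
  (ρ : Perm (Fin n) →* A) (a : Finset (Fin n))

def symAlt : A := symmetrizer K ρ a * alternator K ρ aᶜ

variable {K ρ a} {σ : Perm (Fin n)}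

lemma commute_symAlt {x : A}
    (hx : ∀ σ : Perm (Fin n), (∀ i, σ i ∈ a ↔ i ∈ a) → Commute x (ρ σ)) :
    Commute x (symAlt K ρ a) :=
  (commute_symmetrizer fun σ hσ => hx σ (apply_mem_iff_of_mem_permsOn hσ)).mul_right
    (commute_alternator fun σ hσ => hx σ (apply_mem_iff_of_mem_permsOn_compl hσ))

lemma commute_alternator_compl_of_mem_permsOn (hσ : σ ∈ permsOn n a) :
    Commute (ρ σ) (alternator K ρ aᶜ) :=
  commute_alternator fun _ hτ => (commute_of_mem_permsOn_compl hσ hτ).map ρ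

lemma commute_symmetrizer_of_mem_permsOn_compl (hσ : σ ∈ permsOn n aᶜ) :
    Commute (ρ σ) (symmetrizer K ρ a) :=
  commute_symmetrizer fun _ hτ => ((commute_of_mem_permsOn_compl hτ hσ).map ρ).symm

lemma mul_symAlt (hσ : σ ∈ permsOn n a) : ρ σ * symAlt K ρ a = symAlt K ρ a := by
  rw [symAlt, ← mul_assoc, mul_symmetrizer hσ]

lemma symAlt_mul (hσ : σ ∈ permsOn n a) : symAlt K ρ a * ρ σ = symAlt K ρ a := by
  rw [symAlt, mul_assoc, ← (commute_alternator_compl_of_mem_permsOn hσ).eq, ← mul_assoc,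
    symmetrizer_mul hσ]

lemma mul_symAlt_of_mem_compl (hσ : σ ∈ permsOn n aᶜ) :
    ρ σ * symAlt K ρ a = (Perm.sign σ : ℤ) • symAlt K ρ a := by
  rw [symAlt, ← mul_assoc, (commute_symmetrizer_of_mem_permsOn_compl hσ).eq, mul_assoc,
    mul_alternator hσ, mul_smul_comm]

lemma symAlt_mul_of_mem_compl (hσ : σ ∈ permsOn n aᶜ) :
    symAlt K ρ a * ρ σ = (Perm.sign σ : ℤ) • symAlt K ρ a := by
  rw [symAlt, mul_assoc, alternator_mul hσ, mul_smul_comm]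

lemma symAlt_mul_self [CharZero K] : symAlt K ρ a * symAlt K ρ a = symAlt K ρ a := by
  have hc : Commute (symmetrizer K ρ a) (alternator K ρ aᶜ) :=
    commute_alternator fun _ hτ => (commute_symmetrizer_of_mem_permsOn_compl hτ).symm
  rw [symAlt, mul_assoc, ← mul_assoc (alternator K ρ aᶜ), ← hc.eq, mul_assoc,
    alternator_mul_self, ← mul_assoc, symmetrizer_mul_self]

lemma swap_mul_symAlt_of_mem_compl {j j' : Fin n} (hj : j ∈ aᶜ) (hj' : j' ∈ aᶜ)
    (hjj' : j ≠ j') :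
    ρ (swap j j') * symAlt K ρ a = -symAlt K ρ a := by
  simp [mul_symAlt_of_mem_compl (swap_mem_permsOn hj hj'), Perm.sign_swap hjj']

lemma symAlt_mul_swap_of_mem_compl {j j' : Fin n} (hj : j ∈ aᶜ) (hj' : j' ∈ aᶜ)
    (hjj' : j ≠ j') :
    symAlt K ρ a * ρ (swap j j') = -symAlt K ρ a := by
  simp [symAlt_mul_of_mem_compl (swap_mem_permsOn hj hj'), Perm.sign_swap hjj']

end SymAlt

section SwapSum

variable {K : Type*} [Field K] {A : Type*} [Ring A] [Algebra K A] {n : ℕ}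
  (ρ : Perm (Fin n) →* A)

def swapSum (s t : Finset (Fin n)) : A := ∑ i ∈ s, ∑ j ∈ t, ρ (swap i j)

variable {ρ}

lemma swapSum_comm (s t : Finset (Fin n)) : swapSum ρ s t = swapSum ρ t s := by
  rw [swapSum, Finset.sum_comm]
  simp_rw [swap_comm]
  rfl

lemma commute_swapSum {σ : Perm (Fin n)} {s t : Finset (Fin n)}
    (hs : ∀ i, σ i ∈ s ↔ i ∈ s) (ht : ∀ i, σ i ∈ t ↔ i ∈ t) :
    Commute (ρ σ) (swapSum ρ s t) := by
  have h (i j : Fin n) : ρ σ * ρ (swap i j) = ρ (swap (σ i) (σ j)) * ρ σ := by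
    rw [← map_mul, mul_swap_eq_swap_mul, map_mul]
  simp only [Commute, SemiconjBy, swapSum, Finset.mul_sum, Finset.sum_mul, h]
  exact Finset.sum_equiv σ (fun i => (hs i).symm) fun i _ =>
    Finset.sum_equiv σ (fun j => (ht j).symm) fun _ _ => rfl

variable {a : Finset (Fin n)}

lemma swapSum_self_mul_symAlt :
    swapSum ρ a a * symAlt K ρ a = ((a.card : K) * a.card) • symAlt K ρ a := by
  simp only [swapSum, Finset.sum_mul]
  rw [Finset.sum_congr rfl fun i hi => Finset.sum_congr rfl fun j hj =>
      mul_symAlt (swap_mem_permsOn hi hj),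
    Finset.sum_const, Finset.sum_const, smul_smul, ← Nat.cast_mul, Nat.cast_smul_eq_nsmul]

lemma swapSum_compl_self_mul_symAlt :
    swapSum ρ aᶜ aᶜ * symAlt K ρ a
      = ((aᶜ.card : K) * (2 - aᶜ.card)) • symAlt K ρ a := by
  have hrow : ∀ i ∈ aᶜ, ∑ j ∈ aᶜ, ρ (swap i j) * symAlt K ρ a
      = ((2 : K) - aᶜ.card) • symAlt K ρ a := by
    intro i hi
    rw [Finset.sum_eq_add_card_sub_one_smul (R := K) hi (c := -symAlt K ρ a)
        fun j hj hji => swap_mul_symAlt_of_mem_compl hi hj hji.symm,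
      swap_self, ← Perm.one_def, map_one, one_mul]
    module
  simp only [swapSum, Finset.sum_mul]
  rw [Finset.sum_congr rfl hrow, Finset.sum_const, ← Nat.cast_smul_eq_nsmul K, smul_smul]

lemma swapSum_univ_mul_symAlt :
    swapSum ρ Finset.univ Finset.univ * symAlt K ρ a
      = ((a.card : K) * a.card + aᶜ.card * (2 - aᶜ.card)) • symAlt K ρ a
        + (2 : K) • (swapSum ρ a aᶜ * symAlt K ρ a) := by
  have hsplit : swapSum ρ Finset.univ Finset.univ
      = swapSum ρ a a + swapSum ρ a aᶜ + (swapSum ρ aᶜ a + swapSum ρ aᶜ aᶜ) := by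
    simp only [swapSum, ← Finset.sum_add_distrib, Finset.sum_add_sum_compl]
  rw [hsplit, swapSum_comm aᶜ a, add_mul, add_mul, add_mul, swapSum_self_mul_symAlt,
    swapSum_compl_self_mul_symAlt]
  module

end SwapSum

section SwapSumSquare

variable {K : Type*} [Field K] {A : Type*} [Ring A] [Algebra K A] {n : ℕ}
  {ρ : Perm (Fin n) →* A} {a : Finset (Fin n)} {i i' j j' : Fin n}

lemma symAlt_mul_swap_mul_swap_mul_symAlt_of_fst_eq (hi : i ∈ a) (hj : j ∈ aᶜ)
    (hj' : j' ∈ aᶜ) (hjj' : j ≠ j') :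
    symAlt K ρ a * ρ (swap i j) * ρ (swap i j') * symAlt K ρ a
      = -(symAlt K ρ a * ρ (swap i j) * symAlt K ρ a) := by
  have hij' : i ≠ j' := ne_of_mem_of_not_mem hi (Finset.mem_compl.1 hj')
  have hswap : swap i j * swap i j' = swap j j' * swap i j := by
    rw [mul_swap_eq_swap_mul, swap_apply_left,
      swap_apply_of_ne_of_ne hij'.symm hjj'.symm]
  rw [mul_assoc (symAlt K ρ a), ← map_mul, hswap, map_mul, ← mul_assoc,
    symAlt_mul_swap_of_mem_compl hj hj' hjj', neg_mul, neg_mul]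

lemma symAlt_mul_swap_mul_swap_mul_symAlt_of_snd_eq (hi : i ∈ a) (hi' : i' ∈ a)
    (hj : j ∈ aᶜ) (hii' : i ≠ i') :
    symAlt K ρ a * ρ (swap i j) * ρ (swap i' j) * symAlt K ρ a
      = symAlt K ρ a * ρ (swap i j) * symAlt K ρ a := by
  have hi'j : i' ≠ j := ne_of_mem_of_not_mem hi' (Finset.mem_compl.1 hj)
  have hswap : swap i j * swap i' j = swap i' i * swap i j := by
    rw [mul_swap_eq_swap_mul, swap_apply_right,
      swap_apply_of_ne_of_ne hii'.symm hi'j]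
  rw [mul_assoc (symAlt K ρ a), ← map_mul, hswap, map_mul, ← mul_assoc,
    symAlt_mul (swap_mem_permsOn hi' hi)]

/-- With `σ = (i j)(i' j')`, the transposition `(i i')`, absorbed by `symAlt` on the right, is
conjugated by `σ` to `(j j')`, which `symAlt` turns into `-1` on the left. -/
lemma symAlt_mul_swap_mul_swap_mul_symAlt_of_ne [CharZero K] (hi : i ∈ a) (hi' : i' ∈ a)
    (hj : j ∈ aᶜ) (hj' : j' ∈ aᶜ) (hii' : i ≠ i') (hjj' : j ≠ j') :
    symAlt K ρ a * ρ (swap i j) * ρ (swap i' j') * symAlt K ρ a = 0 := by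
  have hij : i ≠ j := ne_of_mem_of_not_mem hi (Finset.mem_compl.1 hj)
  have hij' : i ≠ j' := ne_of_mem_of_not_mem hi (Finset.mem_compl.1 hj')
  have hi'j : i' ≠ j := ne_of_mem_of_not_mem hi' (Finset.mem_compl.1 hj)
  have hi'j' : i' ≠ j' := ne_of_mem_of_not_mem hi' (Finset.mem_compl.1 hj')
  rw [mul_assoc (symAlt K ρ a), ← map_mul]
  set σ := swap i j * swap i' j'
  have hconj : σ * swap i i' = swap j j' * σ := by
    rw [mul_swap_eq_swap_mul]
    congr 2 <;> simp [σ, swap_apply_of_ne_of_ne, *, Ne.symm]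
  clear_value σ
  set e := symAlt K ρ a
  have hneg : e * ρ σ * e = -(e * ρ σ * e) :=
    calc e * ρ σ * e = e * ρ σ * (ρ (swap i i') * e) := by
          rw [mul_symAlt (swap_mem_permsOn hi hi')]
      _ = e * ρ (swap j j') * ρ σ * e := by
          rw [← mul_assoc, mul_assoc e, ← map_mul, hconj, map_mul, ← mul_assoc]
      _ = -(e * ρ σ * e) := by
          rw [symAlt_mul_swap_of_mem_compl hj hj' hjj', neg_mul, neg_mul]
  have h2 : (2 : K) • (e * ρ σ * e) = 0 := by
    rw [two_smul]
    nth_rewrite 2 [hneg]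
    exact add_neg_cancel _
  exact (smul_eq_zero.1 h2).resolve_left two_ne_zero

lemma symAlt_mul_swap_mul_swapSum_mul_symAlt [CharZero K] (hi : i ∈ a) (hj : j ∈ aᶜ) :
    symAlt K ρ a * ρ (swap i j) * swapSum ρ a aᶜ * symAlt K ρ a
      = symAlt K ρ a
        + ((a.card : K) - aᶜ.card) • (symAlt K ρ a * ρ (swap i j) * symAlt K ρ a) := by
  set e := symAlt K ρ a
  have hdiag : e * ρ (swap i j) * ρ (swap i j) * e = e := by
    rw [mul_assoc e, ← map_mul, swap_mul_self, map_one, mul_one, symAlt_mul_self]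
  have hrow : ∑ j' ∈ aᶜ, e * ρ (swap i j) * ρ (swap i j') * e
      = e + ((aᶜ.card : K) - 1) • -(e * ρ (swap i j) * e) := by
    rw [Finset.sum_eq_add_card_sub_one_smul (R := K) hj fun j' hj' hj'j =>
      symAlt_mul_swap_mul_swap_mul_symAlt_of_fst_eq hi hj hj' hj'j.symm, hdiag]
  have hrow' : ∀ i' ∈ a, i' ≠ i →
      ∑ j' ∈ aᶜ, e * ρ (swap i j) * ρ (swap i' j') * e
        = e * ρ (swap i j) * e := by
    intro i' hi' hi'i
    rw [Finset.sum_eq_add_card_sub_one_smul (R := K) hj (c := 0) fun j' hj' hj'j =>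
        symAlt_mul_swap_mul_swap_mul_symAlt_of_ne hi hi' hj hj' hi'i.symm hj'j.symm,
      symAlt_mul_swap_mul_swap_mul_symAlt_of_snd_eq hi hi' hj hi'i.symm, smul_zero, add_zero]
  simp only [swapSum, Finset.mul_sum, Finset.sum_mul]
  rw [Finset.sum_eq_add_card_sub_one_smul (R := K) hi hrow', hrow]
  module

lemma swapSum_mul_swapSum_mul_symAlt [CharZero K] :
    swapSum ρ a aᶜ * (swapSum ρ a aᶜ * symAlt K ρ a)
      = ((a.card : K) * aᶜ.card) • symAlt K ρ a
        + ((a.card : K) - aᶜ.card) • (swapSum ρ a aᶜ * symAlt K ρ a) := by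
  set e := symAlt K ρ a
  set Y := swapSum ρ a aᶜ
  have hY : Commute Y e := commute_symAlt fun σ hσ =>
    (commute_swapSum hσ (by simpa using fun i => (hσ i).not)).symm
  have he : e * e = e := symAlt_mul_self
  have hYe : Y * e = e * Y * e :=
    calc Y * e = Y * e * e := by rw [mul_assoc, he]
      _ = e * Y * e := by rw [hY.eq]
  have hYYe : Y * (Y * e) = e * Y * Y * e :=
    calc Y * (Y * e) = Y * Y * e * e := by rw [mul_assoc (Y * Y), he, mul_assoc]
      _ = e * Y * Y * e := by rw [(hY.mul_left hY).eq]; simp only [mul_assoc]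
  have heY : e * Y = ∑ i ∈ a, ∑ j ∈ aᶜ, e * ρ (swap i j) := by
    simp only [Y, swapSum, Finset.mul_sum]
  rw [hYYe, heY]
  simp only [Finset.sum_mul]
  rw [Finset.sum_congr rfl fun i hi => Finset.sum_congr rfl fun j hj =>
      symAlt_mul_swap_mul_swapSum_mul_symAlt hi hj]
  simp only [Finset.sum_add_distrib, ← Finset.smul_sum, Finset.sum_const]
  rw [hYe, heY]
  simp only [Finset.sum_mul]
  module

end SwapSumSquare

section HookPoly

open Polynomial

/-- The roots `n (2m - n + 2)` and `n (2m - n)` are the scalars by which the sum of all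
transpositions acts on the isotypic components of the hooks `(m + 1, 1^(n-m-1))` and
`(m, 1^(n-m))`, the irreducible constituents of `H^{⊙[m],∧[n-m]}`. -/
def hookPoly {K : Type*} [Field K] (n m : K) : K[X] :=
  (X - C (n * (2 * m - n + 2))) * (X - C (n * (2 * m - n)))

lemma isCoprime_hookPoly {K : Type*} [Field K] [CharZero K] {n : K} (hn : n ≠ 0) (m : K) :
    IsCoprime (hookPoly n (m + 2)) (hookPoly n m) := by
  unfold hookPoly
  refine IsCoprime.mul_left (IsCoprime.mul_right ?_ ?_) (IsCoprime.mul_right ?_ ?_) <;>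
    refine isCoprime_X_sub_C_of_isUnit_sub (IsUnit.mk0 _ ?_) <;> ring_nf <;> simp [hn]

variable {K : Type*} [Field K] [CharZero K] {A : Type*} [Ring A] [Algebra K A] {n : ℕ}
  {ρ : Perm (Fin n) →* A} {a : Finset (Fin n)}

lemma aeval_hookPoly_mul_symAlt :
    aeval (swapSum ρ Finset.univ Finset.univ) (hookPoly (n : K) (a.card : K)) * symAlt K ρ a
      = 0 := by
  set e := symAlt K ρ a
  set Y := swapSum ρ a aᶜ
  set T := swapSum ρ Finset.univ Finset.univ
  have hn : (n : K) = a.card + aᶜ.card := by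
    rw [← Nat.cast_add, Finset.card_add_card_compl, Fintype.card_fin]
  have hTe : T * e
      = ((a.card : K) * a.card + aᶜ.card * (2 - aᶜ.card)) • e + (2 : K) • (Y * e) :=
    swapSum_univ_mul_symAlt
  have hYYe : Y * (Y * e)
      = ((a.card : K) * aᶜ.card) • e + ((a.card : K) - aᶜ.card) • (Y * e) :=
    swapSum_mul_swapSum_mul_symAlt
  have hTY : Commute T Y :=
    Commute.sum_right _ _ _ fun i _ => Commute.sum_right _ _ _ fun j _ =>
      (commute_swapSum (by simp) (by simp)).symm
  have hTYe : T * (Y * e)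
      = ((a.card : K) * a.card + aᶜ.card * (2 - aᶜ.card)) • (Y * e)
        + (2 : K) • (Y * (Y * e)) := by
    rw [← mul_assoc, hTY.eq, mul_assoc, hTe, mul_add, mul_smul_comm, mul_smul_comm]
  rw [hookPoly, map_mul, map_sub, map_sub, aeval_X, aeval_C, aeval_C,
    Algebra.algebraMap_eq_smul_one, Algebra.algebraMap_eq_smul_one, hn]
  simp only [mul_assoc, sub_mul, mul_sub, smul_mul_assoc, one_mul, mul_smul_comm, hTe, mul_add,
    hTYe, hYYe]
  module

end HookPoly

def permRep (R M : Type*) [CommSemiring R] [AddCommMonoid M] [Module R M] (n : ℕ) :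
    Perm (Fin n) →* Module.End R (PiTensorProduct R fun _ : Fin n => M) where
  toFun σ := (PiTensorProduct.reindex R (fun _ => M) σ).toLinearMap
  map_one' := by
    rw [Perm.one_def, PiTensorProduct.reindex_refl]
    rfl
  map_mul' σ τ := by
    rw [Perm.mul_def, ← PiTensorProduct.reindex_trans]
    rfl

lemma HmixSpan_le_ker_aeval_hookPoly (n m : ℕ) :
    HmixSpan F H n m ≤ LinearMap.ker
      (Polynomial.aeval (swapSum (permRep F H n) Finset.univ Finset.univ) (hookPoly (n : F) m)) :=
  iSup₂_le fun a (ha : a.card = m) => by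
    change LinearMap.range (symAlt F (permRep F H n) a) ≤ _
    rw [LinearMap.range_le_ker_iff, ← Module.End.mul_eq_comp, ← ha]
    exact aeval_hookPoly_mul_symAlt

theorem HmixSpan_inter_eq_bot (k q : ℕ) (hk : 1 ≤ k) :
    HmixSpan F H (k + q) (k + 1) ⊓ HmixSpan F H (k + q) (k - 1) = ⊥ := by
  have hcop : IsCoprime (hookPoly ((k + q : ℕ) : F) ((k + 1 : ℕ) : F))
      (hookPoly ((k + q : ℕ) : F) ((k - 1 : ℕ) : F)) := by
    convert isCoprime_hookPoly (n := ((k + q : ℕ) : F)) (Nat.cast_ne_zero.2 (by omega))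
      ((k - 1 : ℕ) : F) using 2
    push_cast [Nat.cast_sub hk]
    ring
  rw [← disjoint_iff]
  exact (Polynomial.disjoint_ker_aeval_of_isCoprime _ hcop).mono
    (HmixSpan_le_ker_aeval_hookPoly F H _ _) (HmixSpan_le_ker_aeval_hookPoly F H _ _)

end
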